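/- arXiv:2310.03114 — 3 statements merged into one kernel-verified Lean document; each statement's English description precedes it below -/
import Mathlib

section
/- Let $(X, \mathcal{X})$ be a measurable space, $\mu$ a $\sigma$-finite measure on it, and $f, g : X \to \mathbb{R}$ measurable functions with $f(x) > 0$ and $g(x) > 0$ for all $x$, both integrable with respect to $\mu$ and with $\int f \, d\mu > 0$, $\int g \, d\mu > 0$. Define the probability measures $\pi_f(A) = \int_A f \, d\mu / \int_X f \, d\mu$, $\pi_g(A) = \int_A g \, d\mu / \int_X g \, d\mu$, and $\tilde{\pi}(A) = \int_A \max(f,g) \, d\mu / \int_X \max(f,g) \, d\mu$, and set $H_1 = f / \max(f,g)$ and $H_2 = g / \max(f,g)$. Then for every bounded measurable $\varphi : X \to \mathbb{R}$, $\int \varphi \, d\pi_f - \int \varphi \, d\pi_g = \frac{\int \varphi H_1 \, d\tilde{\pi}}{\int H_1 \, d\tilde{\pi}} - \frac{\int \varphi H_2 \, d\tilde{\pi}}{\int H_2 \, d\tilde{\pi}}$. -/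
open MeasureTheory

lemma pi_eq_withDensity' {X : Type*} [MeasurableSpace X] (μ : Measure X)
    (h : X → ℝ) (hm : Measurable h) (hpos : ∀ x, 0 ≤ h x)
    (hi : Integrable h μ) (hI : 0 < ∫ x, h x ∂μ)
    (π : Measure X)
    (hπ : ∀ A : Set X, MeasurableSet A →
      (π A).toReal = (∫ x in A, h x ∂μ) / ∫ x, h x ∂μ) :
    π = μ.withDensity (fun x => ENNReal.ofReal (h x / ∫ x, h x ∂μ)) := by
  set I := ∫ x, h x ∂μ with hIdef
  have huniv : π Set.univ ≠ ⊤ := by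
    intro htop
    have h1 := hπ Set.univ MeasurableSet.univ
    rw [htop] at h1
    rw [setIntegral_univ, div_self hI.ne'] at h1
    simp at h1
  ext A hA
  have hAne : π A ≠ ⊤ := ne_top_of_le_ne_top huniv (measure_mono (Set.subset_univ A))
  have hint : Integrable (fun x => h x / I) (μ.restrict A) := (hi.restrict (s := A)).div_const I
  have hnn : 0 ≤ᵐ[μ.restrict A] fun x => h x / I :=
    ae_of_all _ fun x => div_nonneg (hpos x) hI.le
  calc π A = ENNReal.ofReal ((π A).toReal) := (ENNReal.ofReal_toReal hAne).symm
    _ = ENNReal.ofReal ((∫ x in A, h x ∂μ) / I) := by rw [hπ A hA]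
    _ = ENNReal.ofReal (∫ x in A, h x / I ∂μ) := by rw [integral_div]
    _ = ∫⁻ x in A, ENNReal.ofReal (h x / I) ∂μ :=
        ofReal_integral_eq_lintegral_ofReal hint hnn
    _ = μ.withDensity (fun x => ENNReal.ofReal (h x / I)) A :=
        (withDensity_apply _ hA).symm

lemma integral_withDensity_ofReal' {X : Type*} [MeasurableSpace X] (μ : Measure X)
    (h : X → ℝ) (hm : Measurable h) (hpos : ∀ x, 0 ≤ h x) (ψ : X → ℝ) :
    ∫ x, ψ x ∂(μ.withDensity (fun x => ENNReal.ofReal (h x))) =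
      ∫ x, h x * ψ x ∂μ := by
  have : (fun x => ENNReal.ofReal (h x)) = fun x => ((h x).toNNReal : ENNReal) := rfl
  rw [this, integral_withDensity_eq_integral_smul hm.real_toNNReal ψ]
  congr 1
  ext x
  simp [NNReal.smul_def, Real.coe_toNNReal _ (hpos x)]

/-- The change-of-measure identity underlying the multilevel MCMC estimator:
expectations under the probability measures with densities proportional to `f`
and to `g` are expressed as self-normalized importance-sampling ratios with
respect to the common target with density proportional to `max f g`, with
importance weights `H₁ = f / max f g` and `H₂ = g / max f g`. -/
theorem change_of_measure_identity
    {X : Type*} [MeasurableSpace X] (μ : Measure X) [SigmaFinite μ]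
    (f g : X → ℝ) (hf : Measurable f) (hg : Measurable g)
    (hfpos : ∀ x, 0 < f x) (hgpos : ∀ x, 0 < g x)
    (hfi : Integrable f μ) (hgi : Integrable g μ)
    (hfI : 0 < ∫ x, f x ∂μ) (hgI : 0 < ∫ x, g x ∂μ)
    (πf πg πt : Measure X)
    (hπf : ∀ A : Set X, MeasurableSet A →
      (πf A).toReal = (∫ x in A, f x ∂μ) / ∫ x, f x ∂μ)
    (hπg : ∀ A : Set X, MeasurableSet A →
      (πg A).toReal = (∫ x in A, g x ∂μ) / ∫ x, g x ∂μ)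
    (hπt : ∀ A : Set X, MeasurableSet A →
      (πt A).toReal = (∫ x in A, max (f x) (g x) ∂μ) / ∫ x, max (f x) (g x) ∂μ)
    (φ : X → ℝ) (hφ : Measurable φ) (hφb : ∃ B : ℝ, ∀ x, |φ x| ≤ B) :
    (∫ x, φ x ∂πf) - (∫ x, φ x ∂πg) =
      (∫ x, φ x * (f x / max (f x) (g x)) ∂πt)
          / (∫ x, f x / max (f x) (g x) ∂πt)
        - (∫ x, φ x * (g x / max (f x) (g x)) ∂πt)
          / (∫ x, g x / max (f x) (g x) ∂πt) := by
  set m : X → ℝ := fun x => max (f x) (g x) with hm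
  have hmmeas : Measurable m := hf.max hg
  have hmpos : ∀ x, 0 < m x := fun x => lt_max_of_lt_left (hfpos x)
  have hmi : Integrable m μ := hfi.sup hgi
  set I := ∫ x, f x ∂μ
  set J := ∫ x, g x ∂μ
  set K := ∫ x, m x ∂μ with hKdef
  have hKI : I ≤ K := integral_mono hfi hmi fun x => le_max_left _ _
  have hK : 0 < K := lt_of_lt_of_le hfI hKI
  -- identify the measures
  have hπf' := pi_eq_withDensity' μ f hf (fun x => (hfpos x).le) hfi hfI πf hπf
  have hπg' := pi_eq_withDensity' μ g hg (fun x => (hgpos x).le) hgi hgI πg hπg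
  have hπt' := pi_eq_withDensity' μ m hmmeas (fun x => (hmpos x).le) hmi hK πt hπt
  have hfd : ∀ x, 0 ≤ f x / I := fun x => div_nonneg (hfpos x).le hfI.le
  have hgd : ∀ x, 0 ≤ g x / J := fun x => div_nonneg (hgpos x).le hgI.le
  have hmd : ∀ x, 0 ≤ m x / K := fun x => div_nonneg (hmpos x).le hK.le
  rw [hπf', hπg', hπt']
  rw [integral_withDensity_ofReal' μ _ (hf.div_const I) hfd,
      integral_withDensity_ofReal' μ _ (hg.div_const J) hgd,
      integral_withDensity_ofReal' μ _ (hmmeas.div_const K) hmd,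
      integral_withDensity_ofReal' μ _ (hmmeas.div_const K) hmd,
      integral_withDensity_ofReal' μ _ (hmmeas.div_const K) hmd,
      integral_withDensity_ofReal' μ _ (hmmeas.div_const K) hmd]
  have e1 : ∫ x, f x / I * φ x ∂μ = (∫ x, φ x * f x ∂μ) / I := by
    rw [← integral_div]; congr 1; ext x; ring
  have e2 : ∫ x, g x / J * φ x ∂μ = (∫ x, φ x * g x ∂μ) / J := by
    rw [← integral_div]; congr 1; ext x; ring
  have e3 : ∫ x, m x / K * (φ x * (f x / m x)) ∂μ = (∫ x, φ x * f x ∂μ) / K := by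
    rw [← integral_div]; congr 1; ext x
    field_simp [(hmpos x).ne']
  have e4 : ∫ x, m x / K * (φ x * (g x / m x)) ∂μ = (∫ x, φ x * g x ∂μ) / K := by
    rw [← integral_div]; congr 1; ext x
    field_simp [(hmpos x).ne']
  have e5 : ∫ x, m x / K * (f x / m x) ∂μ = I / K := by
    rw [← integral_div]; congr 1; ext x
    field_simp [(hmpos x).ne']
  have e6 : ∫ x, m x / K * (g x / m x) ∂μ = J / K := by
    rw [← integral_div]; congr 1; ext x
    field_simp [(hmpos x).ne']
  rw [e1, e2, e3, e4, e5, e6,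
      div_div_div_comm, div_self hK.ne', div_one,
      div_div_div_comm, div_self hK.ne', div_one]
end

section
/- Let $(\Omega, \mathcal{F}, \mathbb{P})$ be a probability space, $r \in [1, 2]$, and $0 < \underline{C} \leq \overline{C} < \infty$. Let $\kappa, \kappa' : \Omega \to [\underline{C}, \overline{C}]$ be measurable with $\mathbb{E}[|\kappa - \kappa'|^r]^{1/r} \leq \delta$, and let $\phi, \phi' : \Omega \to \mathbb{R}$ be measurable with $|\phi'| \leq B$ almost surely and $\mathbb{E}[|\phi - \phi'|^r]^{1/r} \leq \delta'$. Define $H_1 = \kappa / \max\{\kappa, \kappa'\}$ and $H_2 = \kappa' / \max\{\kappa, \kappa'\}$. Then $\mathbb{E}\left[|\phi H_1 - \phi' H_2|^r\right]^{1/r} \leq \delta' + \frac{B}{\underline{C}}\,\delta$. -/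
/-!
Since `φ H₁ - φ' H₂ = (φ - φ') H₁ + φ' (κ - κ') / max κ κ'` with `0 ≤ H₁ ≤ 1` and
`max κ κ' ≥ C̲`, the integrand is pointwise at most `|φ - φ'| + (B / C̲) |κ - κ'|`;
Minkowski's inequality in `L^r` then gives the bound.
-/

open MeasureTheory

theorem lintegral_ofReal_abs_rpow_rpow_one_div_eq_eLpNorm' {α : Type*} [MeasurableSpace α]
    (μ : Measure α) (f : α → ℝ) {q : ℝ} (hq : 0 ≤ q) :
    (∫⁻ x, ENNReal.ofReal (|f x| ^ q) ∂μ) ^ (1 / q) = eLpNorm' f q μ := by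
  simp_rw [eLpNorm', ← ENNReal.ofReal_rpow_of_nonneg (abs_nonneg _) hq, Real.enorm_eq_ofReal_abs]

theorem eLpNorm'_le_add_const_mul_of_norm_le {α E F G : Type*} [MeasurableSpace α]
    {μ : Measure α} [NormedAddCommGroup E] [NormedAddCommGroup F] [NormedAddCommGroup G]
    {f : α → E} {g : α → F} {h : α → G} {c q : ℝ} (hc : 0 ≤ c) (hq : 1 ≤ q)
    (hg : AEStronglyMeasurable g μ) (hh : AEStronglyMeasurable h μ)
    (hfgh : ∀ᵐ x ∂μ, ‖f x‖ ≤ ‖g x‖ + c * ‖h x‖) :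
    eLpNorm' f q μ ≤ eLpNorm' g q μ + ENNReal.ofReal c * eLpNorm' h q μ := by
  have hq0 : 0 < q := zero_lt_one.trans_le hq
  calc eLpNorm' f q μ ≤ eLpNorm' ((‖g ·‖) + c • (‖h ·‖)) q μ :=
        eLpNorm'_mono_ae hq0.le <| hfgh.mono fun x hx => hx.trans <| by
          simp only [Pi.add_apply, Pi.smul_apply, smul_eq_mul, Real.norm_eq_abs]
          exact le_abs_self _
    _ ≤ eLpNorm' (‖g ·‖) q μ + eLpNorm' (c • (‖h ·‖)) q μ :=
        eLpNorm'_add_le hg.norm (hh.norm.const_smul c) hq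
    _ = eLpNorm' g q μ + ENNReal.ofReal c * eLpNorm' h q μ := by
        rw [eLpNorm'_const_smul _ hq0, eLpNorm'_norm, eLpNorm'_norm, Real.enorm_eq_ofReal hc]

theorem abs_mul_div_max_sub_mul_div_max_le {x y a a' b c : ℝ} (hc : 0 < c) (hca : c ≤ a)
    (hy : |y| ≤ b) :
    |x * (a / max a a') - y * (a' / max a a')| ≤ |x - y| + b / c * |a - a'| := by
  set m := max a a'
  have hcm : c ≤ m := hca.trans (le_max_left _ _)
  have hm : 0 < m := hc.trans_le hcm
  have hH₁ : |a / m| ≤ 1 := by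
    rw [abs_div, abs_of_pos hm, abs_of_pos (hc.trans_le hca)]
    exact div_le_one_of_le₀ (le_max_left _ _) hm.le
  have hdiff : |y * ((a - a') / m)| ≤ b / c * |a - a'| := calc
    |y * ((a - a') / m)| = |y| * (|a - a'| / m) := by rw [abs_mul, abs_div, abs_of_pos hm]
    _ ≤ b * (|a - a'| / c) := by gcongr; exact (abs_nonneg y).trans hy
    _ = b / c * |a - a'| := by ring
  calc |x * (a / m) - y * (a' / m)| = |(x - y) * (a / m) + y * ((a - a') / m)| := by
        congr 1; ring
    _ ≤ |x - y| * |a / m| + b / c * |a - a'| := by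
        rw [← abs_mul]; exact (abs_add_le _ _).trans (by gcongr)
    _ ≤ |x - y| + b / c * |a - a'| := by
        gcongr; exact mul_le_of_le_one_right (abs_nonneg _) hH₁

theorem max_coupling_weight_Lr_bound_general
    {Ω : Type*} [MeasurableSpace Ω] (μ : Measure Ω) [IsProbabilityMeasure μ]
    (r : ℝ) (hr1 : 1 ≤ r)
    (Cl Cu : ℝ) (hCl : 0 < Cl)
    (κ κ' : Ω → ℝ) (hκm : Measurable κ) (hκ'm : Measurable κ')
    (hκ : ∀ ω, Cl ≤ κ ω ∧ κ ω ≤ Cu)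
    (δ : ℝ) (hδ : 0 ≤ δ)
    (hκκ' : (∫⁻ ω, ENNReal.ofReal (|κ ω - κ' ω| ^ r) ∂μ) ^ (1 / r)
      ≤ ENNReal.ofReal δ)
    (φ φ' : Ω → ℝ) (hφm : Measurable φ) (hφ'm : Measurable φ')
    (B : ℝ) (hB : ∀ᵐ ω ∂μ, |φ' ω| ≤ B)
    (δ' : ℝ) (hδ' : 0 ≤ δ')
    (hφφ' : (∫⁻ ω, ENNReal.ofReal (|φ ω - φ' ω| ^ r) ∂μ) ^ (1 / r)
      ≤ ENNReal.ofReal δ') :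
    (∫⁻ ω, ENNReal.ofReal
        (|φ ω * (κ ω / max (κ ω) (κ' ω))
          - φ' ω * (κ' ω / max (κ ω) (κ' ω))| ^ r) ∂μ) ^ (1 / r)
      ≤ ENNReal.ofReal (δ' + (B / Cl) * δ) := by
  have hr0 : 0 ≤ r := zero_le_one.trans hr1
  have hBC : 0 ≤ B / Cl := by
    obtain ⟨ω, hω⟩ := hB.exists
    exact div_nonneg ((abs_nonneg _).trans hω) hCl.le
  simp_rw [lintegral_ofReal_abs_rpow_rpow_one_div_eq_eLpNorm' μ _ hr0] at hκκ' hφφ' ⊢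
  calc _ ≤ eLpNorm' (fun ω => φ ω - φ' ω) r μ
          + ENNReal.ofReal (B / Cl) * eLpNorm' (fun ω => κ ω - κ' ω) r μ :=
        eLpNorm'_le_add_const_mul_of_norm_le hBC hr1
          (hφm.sub hφ'm).aestronglyMeasurable (hκm.sub hκ'm).aestronglyMeasurable
          (hB.mono fun ω hω => abs_mul_div_max_sub_mul_div_max_le hCl (hκ ω).1 hω)
    _ ≤ ENNReal.ofReal δ' + ENNReal.ofReal (B / Cl) * ENNReal.ofReal δ := by gcongr
    _ = ENNReal.ofReal (δ' + B / Cl * δ) := by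
        rw [← ENNReal.ofReal_mul hBC, ← ENNReal.ofReal_add hδ' (by positivity)]

/-- The single-time-step mechanism of Lemma 2: with likelihood evaluations
`κ, κ'` taking values in `[C̲, C̄]`, max-coupling weights `H₁ = κ / max κ κ'`,
`H₂ = κ' / max κ κ'`, and test-function evaluations `φ, φ'` with `|φ'| ≤ B`
a.s., one has `E[|φ H₁ - φ' H₂|^r]^{1/r} ≤ δ' + (B/C̲) δ` whenever
`E[|κ - κ'|^r]^{1/r} ≤ δ` and `E[|φ - φ'|^r]^{1/r} ≤ δ'`. -/
theorem max_coupling_weight_Lr_bound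
    {Ω : Type*} [MeasurableSpace Ω] (μ : Measure Ω) [IsProbabilityMeasure μ]
    (r : ℝ) (hr1 : 1 ≤ r) (hr2 : r ≤ 2)
    (Cl Cu : ℝ) (hCl : 0 < Cl) (hClu : Cl ≤ Cu)
    (κ κ' : Ω → ℝ) (hκm : Measurable κ) (hκ'm : Measurable κ')
    (hκ : ∀ ω, Cl ≤ κ ω ∧ κ ω ≤ Cu) (hκ' : ∀ ω, Cl ≤ κ' ω ∧ κ' ω ≤ Cu)
    (δ : ℝ) (hδ : 0 ≤ δ)
    (hκκ' : (∫⁻ ω, ENNReal.ofReal (|κ ω - κ' ω| ^ r) ∂μ) ^ (1 / r)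
      ≤ ENNReal.ofReal δ)
    (φ φ' : Ω → ℝ) (hφm : Measurable φ) (hφ'm : Measurable φ')
    (B : ℝ) (hB : ∀ᵐ ω ∂μ, |φ' ω| ≤ B)
    (δ' : ℝ) (hδ' : 0 ≤ δ')
    (hφφ' : (∫⁻ ω, ENNReal.ofReal (|φ ω - φ' ω| ^ r) ∂μ) ^ (1 / r)
      ≤ ENNReal.ofReal δ') :
    (∫⁻ ω, ENNReal.ofReal
        (|φ ω * (κ ω / max (κ ω) (κ' ω))
          - φ' ω * (κ' ω / max (κ ω) (κ' ω))| ^ r) ∂μ) ^ (1 / r)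
      ≤ ENNReal.ofReal (δ' + (B / Cl) * δ) :=
  max_coupling_weight_Lr_bound_general μ r hr1 Cl Cu hCl κ κ' hκm hκ'm hκ δ hδ hκκ' φ φ' hφm hφ'm B
    hB δ' hδ' hφφ'
end

section
/- Let $H \in (0, 1/2)$ and $\varepsilon \in (0, 1)$. Let $L \geq 1$ be an integer with $2^{L(2H+1)} \leq 2^{2H+1}\varepsilon^{-2}$, set $\Delta_l = 2^{-l}$, and for $l \in \{0, \dots, L\}$ set $M_l = \lceil \varepsilon^{-2}\,\Delta_l^{(2H+3)/2}\,\Delta_L^{H-1/2} \rceil$. Then there is a constant $C < \infty$ depending only on $H$ such that the total computational cost satisfies $\sum_{l=0}^{L} \Delta_l^{-2} M_l \leq C\,\varepsilon^{-\frac{4}{2H+1}}$. -/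
/-!
Since `⌈v⌉₊ ≤ v + 1`, level `l` costs at most `ε⁻² 2^{(1/2-H)(L+l)} + 4^l`. Both terms
are geometric in `l` with ratio `> 1`, so the sum is dominated by the top level:
`O(ε⁻² 2^{(1-2H)L} + 4^L)`. The constraint on `L` is exactly `2^L ≤ 2 ε^{-2/(2H+1)}`,
and substituting it turns both terms into `O(ε^{-4/(2H+1)})`.
-/

open Finset Real

theorem geom_sum_range_succ_le_of_one_lt {x : ℝ} (hx : 1 < x) (n : ℕ) :
    ∑ l ∈ range (n + 1), x ^ l ≤ x / (x - 1) * x ^ n := by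
  have hx1 : 0 < x - 1 := by linarith
  rw [geom_sum_eq hx.ne', div_le_iff₀ hx1, pow_succ, div_mul_eq_mul_div,
    div_mul_cancel₀ _ hx1.ne']
  linarith

theorem level_cost_le (H ε : ℝ) (hε : 0 < ε) (L l : ℕ) :
    ((2 : ℝ) ^ (-(l : ℝ))) ^ (-2 : ℝ) *
        ⌈ε ^ (-2 : ℝ) * ((2 : ℝ) ^ (-(l : ℝ))) ^ ((2 * H + 3) / 2) *
          ((2 : ℝ) ^ (-(L : ℝ))) ^ (H - 1 / 2)⌉₊
      ≤ ε ^ (-2 : ℝ) * ((2 : ℝ) ^ (L : ℝ)) ^ (1 / 2 - H) * ((2 : ℝ) ^ (1 / 2 - H)) ^ l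
        + 4 ^ l := by
  set v := ε ^ (-2 : ℝ) * ((2 : ℝ) ^ (-(l : ℝ))) ^ ((2 * H + 3) / 2) *
    ((2 : ℝ) ^ (-(L : ℝ))) ^ (H - 1 / 2)
  have hceil : (⌈v⌉₊ : ℝ) ≤ v + 1 := (Nat.ceil_lt_add_one (by positivity)).le
  have hweight : ((2 : ℝ) ^ (-(l : ℝ))) ^ (-2 : ℝ) = 4 ^ l := by
    rw [← rpow_mul zero_le_two, ← rpow_natCast, show (4 : ℝ) = 2 ^ (2 : ℝ) by norm_num,
      ← rpow_mul zero_le_two]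
    ring_nf
  have hmain : ((2 : ℝ) ^ (-(l : ℝ))) ^ (-2 : ℝ) * v
      = ε ^ (-2 : ℝ) * ((2 : ℝ) ^ (L : ℝ)) ^ (1 / 2 - H) *
          ((2 : ℝ) ^ (1 / 2 - H)) ^ l := by
    simp only [v, ← rpow_natCast, ← rpow_mul zero_le_two]
    rw [mul_left_comm, mul_assoc, mul_assoc, ← rpow_add two_pos, ← rpow_add two_pos,
      ← rpow_add two_pos]
    ring_nf
  calc ((2 : ℝ) ^ (-(l : ℝ))) ^ (-2 : ℝ) * ⌈v⌉₊
      ≤ ((2 : ℝ) ^ (-(l : ℝ))) ^ (-2 : ℝ) * (v + 1) := by gcongr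
    _ = _ := by rw [mul_add_one, hmain, hweight]

theorem multilevel_cost_le (H ε : ℝ) (hH1 : H < 1 / 2) (hε : 0 < ε) (L : ℕ)
    (Δ : ℕ → ℝ) (hΔ : ∀ l : ℕ, Δ l = (2 : ℝ) ^ (-(l : ℝ))) (M : ℕ → ℕ)
    (hM : ∀ l, l ≤ L →
      M l = ⌈ε ^ (-2 : ℝ) * Δ l ^ ((2 * H + 3) / 2) * Δ L ^ (H - 1 / 2)⌉₊) :
    ∑ l ∈ range (L + 1), Δ l ^ (-2 : ℝ) * (M l : ℝ)
      ≤ 2 ^ (1 / 2 - H) / (2 ^ (1 / 2 - H) - 1) * ε ^ (-2 : ℝ) *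
          ((2 : ℝ) ^ (L : ℝ)) ^ (1 - 2 * H)
        + 4 / 3 * ((2 : ℝ) ^ (L : ℝ)) ^ 2 := by
  set r : ℝ := 2 ^ (1 / 2 - H)
  have hr : 1 < r := one_lt_rpow one_lt_two (by linarith)
  have hrL :
      ((2 : ℝ) ^ (L : ℝ)) ^ (1 / 2 - H) * r ^ L = ((2 : ℝ) ^ (L : ℝ)) ^ (1 - 2 * H) := by
    simp only [r, ← rpow_natCast, ← rpow_mul zero_le_two, ← rpow_add two_pos]
    ring_nf
  have h4L : ((2 : ℝ) ^ (L : ℝ)) ^ 2 = 4 ^ L := by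
    rw [rpow_natCast, ← pow_mul, mul_comm, pow_mul]
    norm_num
  calc ∑ l ∈ range (L + 1), Δ l ^ (-2 : ℝ) * (M l : ℝ)
      ≤ ∑ l ∈ range (L + 1),
          (ε ^ (-2 : ℝ) * ((2 : ℝ) ^ (L : ℝ)) ^ (1 / 2 - H) * r ^ l + 4 ^ l) := by
        refine sum_le_sum fun l hl => ?_
        rw [hM l (Nat.lt_succ_iff.mp (mem_range.mp hl)), hΔ, hΔ]
        exact level_cost_le H ε hε L l
    _ = ε ^ (-2 : ℝ) * ((2 : ℝ) ^ (L : ℝ)) ^ (1 / 2 - H) * ∑ l ∈ range (L + 1), r ^ l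
          + ∑ l ∈ range (L + 1), (4 : ℝ) ^ l := by
        rw [sum_add_distrib, mul_sum]
    _ ≤ ε ^ (-2 : ℝ) * ((2 : ℝ) ^ (L : ℝ)) ^ (1 / 2 - H) * (r / (r - 1) * r ^ L)
          + 4 / (4 - 1) * 4 ^ L := by
        gcongr
        · exact geom_sum_range_succ_le_of_one_lt hr L
        · exact geom_sum_range_succ_le_of_one_lt (by norm_num) L
    _ = _ := by
        rw [← hrL, h4L]
        ring

theorem two_rpow_le_of_rpow_mul_le (p ε : ℝ) (hp : 0 < p) (hε : 0 < ε) (L : ℕ)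
    (h : (2 : ℝ) ^ ((L : ℝ) * p) ≤ (2 : ℝ) ^ p * ε ^ (-2 : ℝ)) :
    (2 : ℝ) ^ (L : ℝ) ≤ 2 * ε ^ (-2 / p) := by
  rwa [← rpow_le_rpow_iff (by positivity) (by positivity) hp, ← rpow_mul zero_le_two,
    mul_rpow zero_le_two (by positivity), ← rpow_mul hε.le, div_mul_cancel₀ _ hp.ne']

theorem cost_le_of_le_two_mul_rpow (p q ε N A B : ℝ) (hp : 0 < p) (hq : 0 ≤ q)
    (hpq : p + q = 2) (hε : 0 < ε) (hN0 : 0 ≤ N) (hA : 0 ≤ A) (hB : 0 ≤ B)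
    (hN : N ≤ 2 * ε ^ (-2 / p)) :
    A * ε ^ (-2 : ℝ) * N ^ q + B * N ^ 2 ≤ (A * 2 ^ q + 4 * B) * ε ^ (-(4 / p)) := by
  set Y := ε ^ (-2 / p)
  have hY : 0 < Y := by positivity
  have hεY : ε ^ (-2 : ℝ) = Y ^ p := by rw [← rpow_mul hε.le, div_mul_cancel₀ _ hp.ne']
  have hεY2 : ε ^ (-(4 / p)) = Y ^ p * Y ^ q := by
    rw [← rpow_add hY, hpq, ← rpow_mul hε.le]
    ring_nf
  have hNq : N ^ q ≤ 2 ^ q * Y ^ q := by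
    rw [← mul_rpow zero_le_two hY.le]
    exact rpow_le_rpow hN0 hN hq
  have hN2 : N ^ 2 ≤ 4 * (Y ^ p * Y ^ q) := by
    rw [← rpow_add hY, hpq, rpow_two]
    nlinarith
  calc A * ε ^ (-2 : ℝ) * N ^ q + B * N ^ 2
      ≤ A * Y ^ p * (2 ^ q * Y ^ q) + B * (4 * (Y ^ p * Y ^ q)) := by
        rw [hεY]; gcongr
    _ = _ := by rw [hεY2]; ring

/-- The cost calculation for the multilevel MCMC method: with `Δ_l = 2^{-l}`,
`2^{L(2H+1)} ≤ 2^{2H+1} ε^{-2}` and `M_l = ⌈ε^{-2} Δ_l^{(2H+3)/2} Δ_L^{H-1/2}⌉`,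
there is a constant `C` depending only on `H` such that the total cost
satisfies `∑_{l=0}^L Δ_l^{-2} M_l ≤ C ε^{-4/(2H+1)}`. -/
theorem multilevel_cost_bound
    (H : ℝ) (hH0 : 0 < H) (hH1 : H < 1 / 2) :
    ∃ C : ℝ, ∀ (ε : ℝ), 0 < ε → ε < 1 →
      ∀ (L : ℕ), 1 ≤ L →
        (2 : ℝ) ^ ((L : ℝ) * (2 * H + 1)) ≤ (2 : ℝ) ^ (2 * H + 1) * ε ^ (-2 : ℝ) →
        ∀ (Δ : ℕ → ℝ), (∀ l : ℕ, Δ l = (2 : ℝ) ^ (-(l : ℝ))) →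
        ∀ (M : ℕ → ℕ),
          (∀ l, l ≤ L →
            M l = ⌈ε ^ (-2 : ℝ) * Δ l ^ ((2 * H + 3) / 2) * Δ L ^ (H - 1 / 2)⌉₊) →
          ∑ l ∈ Finset.range (L + 1), Δ l ^ (-2 : ℝ) * (M l : ℝ)
            ≤ C * ε ^ (-(4 / (2 * H + 1))) := by
  set A : ℝ := 2 ^ (1 / 2 - H) / (2 ^ (1 / 2 - H) - 1)
  have hA : 0 ≤ A :=
    div_nonneg (by positivity) (sub_nonneg.mpr (one_le_rpow one_le_two (by linarith)))
  refine ⟨A * 2 ^ (1 - 2 * H) + 4 * (4 / 3), fun ε hε _ L _ hLε Δ hΔ M hM => ?_⟩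
  have hp : 0 < 2 * H + 1 := by linarith
  calc ∑ l ∈ range (L + 1), Δ l ^ (-2 : ℝ) * (M l : ℝ)
      ≤ A * ε ^ (-2 : ℝ) * ((2 : ℝ) ^ (L : ℝ)) ^ (1 - 2 * H)
          + 4 / 3 * ((2 : ℝ) ^ (L : ℝ)) ^ 2 :=
        multilevel_cost_le H ε hH1 hε L Δ hΔ M hM
    _ ≤ _ :=
        cost_le_of_le_two_mul_rpow _ _ ε _ A _ hp (by linarith) (by ring) hε (by positivity) hA
          (by norm_num) (two_rpow_le_of_rpow_mul_le _ ε hp hε L hLε)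
end
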